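/- arXiv:1605.02898 — 5 statements merged into one kernel-verified Lean document; each statement's English description precedes it below -/
import Mathlib

section
/- Let 𝔽 be a field of characteristic 0, g = gl_N(𝔽), f^{pr} = Σ_{i=1}^{N−1} e_{i+1,i} the principal nilpotent, n₊ ⊂ gl_N the subalgebra of strictly upper triangular matrices, and I ⊂ U(gl_N) the left ideal generated by {m − tr(f^{pr}m) : m ∈ n₊}. Let F^{pr} = Σ_{i=1}^{N−1} E_{i+1,i} ∈ Mat_{N×N}(𝔽) and π₋E = Σ_{1≤i≤j≤N} e_{ji} E_{ij}. Then for every constant matrix D ∈ Mat_{N×N}(𝔽): rdet(E + D) − rdet(F^{pr} + π₋E + D) ∈ I. (Equivalently, ρ(rdet(E+D)) = rdet(π₋E + F^{pr} + D), where ρ : U(gl_N) → U(gl_N)/I composed with the identification of the quotient with U(b₋).) -/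
/-
Row by row, `E + D` and `F^{pr} + π₋E + D` differ only strictly below the diagonal, where the
difference of the `(i, j)` entries (`j < i`) is the generator `e_{ji} − tr(f^{pr} e_{ji})` of `I`.
This generator commutes with every entry of `F^{pr} + π₋E + D` in a lower row `i' > i`, since those
are scalars or `e_{ci'}` with `c ≥ i' > i > j`. Telescoping each ordered product of the row
determinant over its rows, every generator can therefore be moved to the far right, into the left
ideal `I`.
-/

attribute [local instance] LieRing.ofAssociativeRing

/-- The row determinant of a square matrix over a (possibly noncommutative) unital ring:
`rdet A = Σ_{σ ∈ S_N} sign(σ) A_{1σ(1)} A_{2σ(2)} ⋯ A_{Nσ(N)}`, with the factors multiplied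
in order of increasing row index. -/
noncomputable def rdet {R : Type*} [Ring R] {N : ℕ} (A : Matrix (Fin N) (Fin N) R) : R :=
  ∑ σ : Equiv.Perm (Fin N),
    (Equiv.Perm.sign σ : ℤ) • (List.ofFn fun i => A i (σ i)).prod

/-- The matrix `E ∈ Mat_{N×N}(U(gl_N))`: its `(i,j)` entry is the elementary matrix
`e_{ji} ∈ gl_N` viewed in `U(gl_N)`. -/
noncomputable def Emat (𝔽 : Type*) [Field 𝔽] (N : ℕ) :
    Matrix (Fin N) (Fin N) (UniversalEnvelopingAlgebra 𝔽 (Matrix (Fin N) (Fin N) 𝔽)) :=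
  fun i j => UniversalEnvelopingAlgebra.ι 𝔽 (Matrix.single j i (1 : 𝔽))

/-- `π₋E = Σ_{i≤j} e_{ji}E_{ij}`: the entrywise projection of `E` onto the lower triangular
subalgebra `b₋` (the `(i,j)` entry is kept iff `i ≤ j`). -/
noncomputable def piMinusE (𝔽 : Type*) [Field 𝔽] (N : ℕ) :
    Matrix (Fin N) (Fin N) (UniversalEnvelopingAlgebra 𝔽 (Matrix (Fin N) (Fin N) 𝔽)) :=
  fun i j => if i ≤ j then Emat 𝔽 N i j else 0

/-- `F^{pr} = Σ_{i=1}^{N−1} E_{i+1,i} ∈ Mat_{N×N}(𝔽)`, the matrix of the principal nilpotent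
`f^{pr} = Σ_{i=1}^{N−1} e_{i+1,i}`. -/
def Fpr (𝔽 : Type*) [Field 𝔽] (N : ℕ) : Matrix (Fin N) (Fin N) 𝔽 :=
  fun i j => if (i : ℕ) = (j : ℕ) + 1 then 1 else 0

/-- The left ideal `I ⊂ U(gl_N)` generated by `{m − tr(f^{pr}·m) : m ∈ n₊}`, where
`n₊` is the subalgebra of strictly upper triangular matrices. -/
noncomputable def Ipr (𝔽 : Type*) [Field 𝔽] (N : ℕ) :
    Ideal (UniversalEnvelopingAlgebra 𝔽 (Matrix (Fin N) (Fin N) 𝔽)) :=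
  Ideal.span {x | ∃ m : Matrix (Fin N) (Fin N) 𝔽,
    (∀ i j : Fin N, j ≤ i → m i j = 0) ∧
    x = UniversalEnvelopingAlgebra.ι 𝔽 m -
      algebraMap 𝔽 (UniversalEnvelopingAlgebra 𝔽 (Matrix (Fin N) (Fin N) 𝔽))
        (Matrix.trace (Fpr 𝔽 N * m))}

theorem List.prod_ofFn_sub_prod_ofFn_mem {R : Type*} [Ring R] (I : Ideal R) {n : ℕ}
    (f g : Fin n → R) (hmem : ∀ i, f i - g i ∈ I)
    (hcomm : ∀ i j, i < j → Commute (f i - g i) (g j)) :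
    (List.ofFn f).prod - (List.ofFn g).prod ∈ I := by
  induction n with
  | zero => simp
  | succ n ih =>
    set Pf := (List.ofFn fun i => f i.succ).prod
    set Pg := (List.ofFn fun i => g i.succ).prod
    have htail : Pf - Pg ∈ I :=
      ih _ _ (fun i => hmem i.succ) fun i j hij => hcomm _ _ (Fin.succ_lt_succ_iff.mpr hij)
    have hhead : Commute (f 0 - g 0) Pg := by
      refine Commute.list_prod_right _ _ fun x hx => ?_
      obtain ⟨i, rfl⟩ := List.mem_ofFn.mp hx
      exact hcomm 0 i.succ (Fin.succ_pos i)
    have hsplit : f 0 * Pf - g 0 * Pg = f 0 * (Pf - Pg) + Pg * (f 0 - g 0) := by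
      rw [← hhead.eq]; noncomm_ring
    rw [List.ofFn_succ, List.ofFn_succ, List.prod_cons, List.prod_cons, hsplit]
    exact I.add_mem (I.mul_mem_left _ htail) (I.mul_mem_left _ (hmem 0))

theorem rdet_sub_rdet_mem {R : Type*} [Ring R] (I : Ideal R) {N : ℕ}
    (A B : Matrix (Fin N) (Fin N) R) (hmem : ∀ i j, A i j - B i j ∈ I)
    (hcomm : ∀ i i', i < i' → ∀ j c, Commute (A i j - B i j) (B i' c)) :
    rdet A - rdet B ∈ I := by
  rw [rdet, rdet, ← Finset.sum_sub_distrib]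
  refine I.sum_mem fun σ _ => ?_
  rw [← smul_sub]
  exact I.smul_of_tower_mem _ <| List.prod_ofFn_sub_prod_ofFn_mem I _ _
    (fun i => hmem i (σ i)) fun i i' hii' => hcomm i i' hii' _ _

section PrincipalNilpotent

variable {𝔽 : Type*} [Field 𝔽] {N : ℕ}

local notation "𝓤" => UniversalEnvelopingAlgebra 𝔽 (Matrix (Fin N) (Fin N) 𝔽)

theorem commute_ι_of_mul_eq_zero {m m' : Matrix (Fin N) (Fin N) 𝔽} (h : m * m' = 0)
    (h' : m' * m = 0) :
    Commute (UniversalEnvelopingAlgebra.ι 𝔽 m) (UniversalEnvelopingAlgebra.ι 𝔽 m') := by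
  have := (UniversalEnvelopingAlgebra.ι 𝔽).map_lie m m'
  rw [Ring.lie_def, Ring.lie_def, h, h', sub_zero, map_zero] at this
  exact sub_eq_zero.mp this.symm

theorem Fpr_apply_eq_zero_of_le {i j : Fin N} (h : i ≤ j) : Fpr 𝔽 N i j = 0 :=
  if_neg fun h' => absurd (Fin.le_def.mp h) (by omega)

theorem Emat_add_sub_Fpr_add_piMinusE_add_apply (D : Matrix (Fin N) (Fin N) 𝔽) (i j : Fin N) :
    (Emat 𝔽 N + D.map (algebraMap 𝔽 𝓤)) i j -
        ((Fpr 𝔽 N).map (algebraMap 𝔽 𝓤) + piMinusE 𝔽 N + D.map (algebraMap 𝔽 𝓤)) i j =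
      if j < i then Emat 𝔽 N i j - algebraMap 𝔽 𝓤 (Fpr 𝔽 N i j) else 0 := by
  simp only [Matrix.add_apply, Matrix.map_apply, piMinusE]
  split_ifs with hij hji hji
  · exact absurd hji (not_lt.mpr hij)
  · rw [Fpr_apply_eq_zero_of_le hij, map_zero]; abel
  · abel
  · exact absurd (lt_of_not_ge hij) hji

theorem Emat_sub_algebraMap_Fpr_mem_Ipr {i j : Fin N} (hji : j < i) :
    Emat 𝔽 N i j - algebraMap 𝔽 𝓤 (Fpr 𝔽 N i j) ∈ Ipr 𝔽 N := by
  refine Ideal.subset_span ⟨Matrix.single j i 1, fun a b hba => ?_, ?_⟩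
  · rw [Matrix.single_apply_of_ne]
    rintro ⟨rfl, rfl⟩
    exact absurd hji (not_lt.mpr hba)
  · rw [Matrix.trace_mul_single, MulOpposite.op_one, one_smul]
    rfl

theorem commute_Emat_sub_algebraMap_Fpr_add_piMinusE_add (D : Matrix (Fin N) (Fin N) 𝔽)
    {i j i' : Fin N} (hji : j < i) (hii' : i < i') (c : Fin N) (s : 𝔽) :
    Commute (Emat 𝔽 N i j - algebraMap 𝔽 𝓤 s)
      (((Fpr 𝔽 N).map (algebraMap 𝔽 𝓤) + piMinusE 𝔽 N + D.map (algebraMap 𝔽 𝓤)) i' c) := by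
  refine Commute.sub_left ?_ (Algebra.commute_algebraMap_left _ _)
  simp only [Matrix.add_apply, Matrix.map_apply, piMinusE]
  refine ((Algebra.commute_algebraMap_right _ _).add_right ?_).add_right
    (Algebra.commute_algebraMap_right _ _)
  split_ifs with hi'c
  · exact commute_ι_of_mul_eq_zero
      (Matrix.single_mul_single_of_ne _ _ _ _ (hii'.trans_le hi'c).ne _)
      (Matrix.single_mul_single_of_ne _ _ _ _ (hji.trans hii').ne' _)
  · exact Commute.zero_right _

end PrincipalNilpotent

theorem stmt_4_general {𝔽 : Type*} [Field 𝔽] {N : ℕ} (D : Matrix (Fin N) (Fin N) 𝔽) :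
    rdet (Emat 𝔽 N +
        D.map (algebraMap 𝔽 (UniversalEnvelopingAlgebra 𝔽 (Matrix (Fin N) (Fin N) 𝔽)))) -
      rdet ((Fpr 𝔽 N).map
          (algebraMap 𝔽 (UniversalEnvelopingAlgebra 𝔽 (Matrix (Fin N) (Fin N) 𝔽))) +
        piMinusE 𝔽 N +
        D.map (algebraMap 𝔽 (UniversalEnvelopingAlgebra 𝔽 (Matrix (Fin N) (Fin N) 𝔽))))
      ∈ Ipr 𝔽 N := by
  refine rdet_sub_rdet_mem _ _ _ (fun i j => ?_) fun i i' hii' j c => ?_ <;>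
    rw [Emat_add_sub_Fpr_add_piMinusE_add_apply] <;> split_ifs with hji
  · exact Emat_sub_algebraMap_Fpr_mem_Ipr hji
  · exact Ideal.zero_mem _
  · exact commute_Emat_sub_algebraMap_Fpr_add_piMinusE_add D hji hii' c _
  · exact Commute.zero_left _

/-- for `g = gl_N` with principal nilpotent `f^{pr}`, and for every constant
matrix `D ∈ Mat_{N×N}(𝔽)`:
`rdet(E + D) − rdet(F^{pr} + π₋E + D) ∈ I`, i.e. `ρ(rdet(E+D)) = rdet(π₋E + F^{pr} + D)`. -/
theorem stmt_4 {𝔽 : Type*} [Field 𝔽] [CharZero 𝔽] {N : ℕ} (D : Matrix (Fin N) (Fin N) 𝔽) :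
    rdet (Emat 𝔽 N +
        D.map (algebraMap 𝔽 (UniversalEnvelopingAlgebra 𝔽 (Matrix (Fin N) (Fin N) 𝔽)))) -
      rdet ((Fpr 𝔽 N).map
          (algebraMap 𝔽 (UniversalEnvelopingAlgebra 𝔽 (Matrix (Fin N) (Fin N) 𝔽))) +
        piMinusE 𝔽 N +
        D.map (algebraMap 𝔽 (UniversalEnvelopingAlgebra 𝔽 (Matrix (Fin N) (Fin N) 𝔽))))
      ∈ Ipr 𝔽 N :=
  stmt_4_general D
end

section
/- Let U be a unital associative algebra over a field 𝔽 of characteristic 0, Z ⊆ U its center, and let A(z) ∈ Mat_{M×N}(U((z^{−1}))) be an operator of Yangian type. Then: (a) for any matrices J ∈ Mat_{P×M}(Z) and I ∈ Mat_{N×Q}(Z), the matrix J·A(z)·I ∈ Mat_{P×Q}(U((z^{−1}))) is an operator of Yangian type; (b) if M = N and A(z) is invertible in Mat_{N×N}(U((z^{−1}))), then A(z)^{−1} is an operator of Yangian type with respect to the opposite product of U (i.e., the Yangian identity holds for A^{−1} with all products taken in U^{op}). -/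
/-- A matrix `A(z)` with entries in `U((z⁻¹))` (formal Laurent series in `z⁻¹`, realized as
`LaurentSeries U = HahnSeries ℤ U` in the variable `t = z⁻¹`, so that `(A i j).coeff n` is the
coefficient of `z^{−n}` in `A_{ij}(z)`) is an *operator of Yangian type* for the associative
algebra `U` if `(z−w)[A_{ij}(z), A_{hk}(w)] = A_{hj}(w)A_{ik}(z) − A_{hj}(z)A_{ik}(w)` holds,
i.e. coefficient-wise: for all `m n : ℤ`,
`[a_{ij,m+1}, a_{hk,n}] − [a_{ij,m}, a_{hk,n+1}] = a_{hj,n} a_{ik,m} − a_{hj,m} a_{ik,n}`,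
where `a_{ij,m} = (A i j).coeff m` and `[x,y] = xy − yx`. -/
def IsYangianType {U : Type*} [Ring U] {M N : Type*}
    (A : Matrix M N (LaurentSeries U)) : Prop :=
  ∀ (i h : M) (j k : N) (m n : ℤ),
    ((A i j).coeff (m + 1) * (A h k).coeff n - (A h k).coeff n * (A i j).coeff (m + 1)) -
      ((A i j).coeff m * (A h k).coeff (n + 1) - (A h k).coeff (n + 1) * (A i j).coeff m) =
    (A h j).coeff n * (A i k).coeff m - (A h j).coeff m * (A i k).coeff n

/-- The same identity, with all products taken in the opposite algebra `U^op`
(so `[x,y]^op = yx − xy` and `x ∘ y = y x`). -/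
def IsYangianTypeOp {U : Type*} [Ring U] {M N : Type*}
    (A : Matrix M N (LaurentSeries U)) : Prop :=
  ∀ (i h : M) (j k : N) (m n : ℤ),
    ((A h k).coeff n * (A i j).coeff (m + 1) - (A i j).coeff (m + 1) * (A h k).coeff n) -
      ((A h k).coeff (n + 1) * (A i j).coeff m - (A i j).coeff m * (A h k).coeff (n + 1)) =
    (A i k).coeff m * (A h j).coeff n - (A i k).coeff n * (A h j).coeff m

/-!
(a) Both sides of the Yangian identity are bilinear in the entries of `A`. For `J A I` with
central `J`, `I` each side is the same central bilinear combination of the corresponding sides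
for `A`, so the identity is inherited.

(b) Over two-variable Laurent series put `A₁(z) = A(z) ⊗ 1` and `A₂(w) = 1 ⊗ A(w)`. The
identity is the RTT relation `(z - w)[A₁(z), A₂(w)] = (A₂(w)A₁(z) - A₂(z)A₁(w))P`, with `P`
the flip of the two tensor factors. Conjugating by `A₁(z)⁻¹A₂(w)⁻¹` and using
`P A₁⁻¹ = A₂⁻¹ P`, `P A₂⁻¹ = A₁⁻¹ P` yields the same relation for the inverse with all
products reversed, i.e. the identity in `Uᵐᵒᵖ`.
-/

open Finset

namespace Yangian

section Central

variable {U : Type*} [Ring U]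

theorem sum_mul_mul_sum_mul_of_mem_center {ι κ : Type*} [Fintype ι] [Fintype κ]
    (x : ι → U) {y : κ → U} (hy : ∀ j, y j ∈ Subring.center U) (a : ι → U) (b : κ → U) :
    (∑ i, x i * a i) * (∑ j, y j * b j) = ∑ i, ∑ j, x i * y j * (a i * b j) := by
  rw [sum_mul_sum]
  refine sum_congr rfl fun i _ => sum_congr rfl fun j _ => ?_
  rw [mul_assoc, ← mul_assoc (a i), Subring.mem_center_iff.mp (hy j), mul_assoc, mul_assoc]

theorem sum_mul_mul_sum_mul_of_mem_center' {ι κ : Type*} [Fintype ι] [Fintype κ]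
    {x : ι → U} (hx : ∀ i, x i ∈ Subring.center U) (y : κ → U) (a : ι → U) (b : κ → U) :
    (∑ j, y j * b j) * (∑ i, x i * a i) = ∑ i, ∑ j, x i * y j * (b j * a i) := by
  rw [sum_mul_mul_sum_mul_of_mem_center y hx, sum_comm]
  simp_rw [Subring.mem_center_iff.mp (hx _)]

theorem coeff_map_C_mul_apply {L M N : Type*} [Fintype M] (J : Matrix L M U)
    (A : Matrix M N (LaurentSeries U)) (i : L) (j : N) (m : ℤ) :
    ((J.map (HahnSeries.C : U →+* HahnSeries ℤ U) * A) i j).coeff m =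
      ∑ s, J i s * (A s j).coeff m := by
  simp [Matrix.mul_apply]

theorem coeff_mul_map_C_apply {M N Q : Type*} [Fintype N] (A : Matrix M N (LaurentSeries U))
    (I : Matrix N Q U) (i : M) (j : Q) (m : ℤ) :
    ((A * I.map (HahnSeries.C : U →+* HahnSeries ℤ U)) i j).coeff m =
      ∑ t, (A i t).coeff m * I t j := by
  simp [Matrix.mul_apply, HahnSeries.C_apply, HahnSeries.coeff_mul_single_zero]

end Central

section TwoVariables

variable {R : Type*} [Ring R]

theorem coeff_single_neg_one_mul (y : LaurentSeries R) (m : ℤ) :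
    (HahnSeries.single (-1) 1 * y).coeff m = y.coeff (m + 1) := by
  simpa using HahnSeries.coeff_single_mul_add (r := (1 : R)) (x := y) (a := m + 1) (b := -1)

theorem coeff_mul_single_neg_one (y : LaurentSeries R) (m : ℤ) :
    (y * HahnSeries.single (-1) 1).coeff m = y.coeff (m + 1) := by
  simpa using HahnSeries.coeff_mul_single_add (r := (1 : R)) (x := y) (a := m + 1) (b := -1)

/-- In `LaurentSeries (LaurentSeries R)` the inner variable is `z⁻¹` and the outer one `w⁻¹`;
`ofZ` embeds `f(z)` as it stands and `ofW` sends it to `f(w)`. -/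
noncomputable abbrev ofZ : LaurentSeries R →+* LaurentSeries (LaurentSeries R) := HahnSeries.C

noncomputable def ofW : LaurentSeries R →+* LaurentSeries (LaurentSeries R) where
  toFun x := x.map (HahnSeries.C : R →+* LaurentSeries R)
  map_zero' := by ext; simp
  map_one' := by
    ext n
    by_cases hn : n = 0 <;> simp [hn, HahnSeries.coeff_one]
  map_add' x y := by ext; simp
  map_mul' _ _ := HahnSeries.map_mul (HahnSeries.C : R →+* LaurentSeries R).toNonUnitalRingHom

theorem coeff_ofW (x : LaurentSeries R) (n : ℤ) : (ofW x).coeff n = HahnSeries.C (x.coeff n) :=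
  rfl

variable (R) in
noncomputable def zSubW : LaurentSeries (LaurentSeries R) :=
  ofZ (HahnSeries.single (-1) 1) - HahnSeries.single (-1) 1

theorem coeff_coeff_zSubW_mul (X : LaurentSeries (LaurentSeries R)) (m n : ℤ) :
    ((zSubW R * X).coeff n).coeff m = (X.coeff n).coeff (m + 1) - (X.coeff (n + 1)).coeff m := by
  rw [zSubW, sub_mul, HahnSeries.coeff_sub, HahnSeries.coeff_sub, HahnSeries.C_apply,
    HahnSeries.coeff_single_zero_mul, coeff_single_neg_one_mul, coeff_single_neg_one_mul]

theorem coeff_coeff_mul_zSubW (X : LaurentSeries (LaurentSeries R)) (m n : ℤ) :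
    ((X * zSubW R).coeff n).coeff m = (X.coeff n).coeff (m + 1) - (X.coeff (n + 1)).coeff m := by
  rw [zSubW, mul_sub, HahnSeries.coeff_sub, HahnSeries.coeff_sub, HahnSeries.C_apply,
    HahnSeries.coeff_mul_single_zero, coeff_mul_single_neg_one, coeff_mul_single_neg_one]

theorem zSubW_commute (X : LaurentSeries (LaurentSeries R)) : Commute (zSubW R) X := by
  ext n m
  rw [coeff_coeff_zSubW_mul, coeff_coeff_mul_zSubW]

theorem coeff_coeff_ofZ_mul_ofW (f g : LaurentSeries R) (m n : ℤ) :
    ((ofZ f * ofW g).coeff n).coeff m = f.coeff m * g.coeff n := by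
  rw [HahnSeries.C_apply, HahnSeries.coeff_single_zero_mul, coeff_ofW, HahnSeries.C_apply,
    HahnSeries.coeff_mul_single_zero]

theorem coeff_coeff_ofW_mul_ofZ (f g : LaurentSeries R) (m n : ℤ) :
    ((ofW g * ofZ f).coeff n).coeff m = g.coeff n * f.coeff m := by
  rw [HahnSeries.C_apply, HahnSeries.coeff_mul_single_zero, coeff_ofW, HahnSeries.C_apply,
    HahnSeries.coeff_single_zero_mul]

end TwoVariables

section TensorLegs

variable {ι R : Type*} [Fintype ι] [DecidableEq ι] [Ring R]

/- `Matrix ι ι (Matrix ι ι R)` stands for `End (V ⊗ V)` with `V = ι → R`: the entry `X i j h k`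
is the coefficient at `(eᵢ ⊗ eₕ, eⱼ ⊗ eₖ)`. Then `leg₁ M = M ⊗ 1`, `leg₂ M = 1 ⊗ M`, and
`tensorFlip` is the flip `P`. -/
variable (ι) in
def leg₁ : Matrix ι ι R →+* Matrix ι ι (Matrix ι ι R) := (Matrix.scalar ι).mapMatrix

variable (ι) in
def leg₂ : Matrix ι ι R →+* Matrix ι ι (Matrix ι ι R) := Matrix.scalar ι

variable (ι R) in
def tensorFlip : Matrix ι ι (Matrix ι ι R) := Matrix.of fun i j => Matrix.single j i 1

theorem leg₁_mul_leg₂_apply (M N : Matrix ι ι R) (i j h k : ι) :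
    (leg₁ ι M * leg₂ ι N) i j h k = M i j * N h k := by
  simp [leg₁, leg₂, Matrix.mul_diagonal, Matrix.diagonal_mul]

theorem leg₂_mul_leg₁_apply (M N : Matrix ι ι R) (i j h k : ι) :
    (leg₂ ι N * leg₁ ι M) i j h k = N h k * M i j := by
  simp [leg₁, leg₂, Matrix.mul_diagonal, Matrix.diagonal_mul]

theorem mul_tensorFlip_apply (X : Matrix ι ι (Matrix ι ι R)) (i j h k : ι) :
    (X * tensorFlip ι R) i j h k = X i k h j := by
  simp [tensorFlip, Matrix.mul_apply, Matrix.sum_apply, Matrix.single, ite_and]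

theorem tensorFlip_mul_apply (X : Matrix ι ι (Matrix ι ι R)) (i j h k : ι) :
    (tensorFlip ι R * X) i j h k = X h j i k := by
  simp [tensorFlip, Matrix.mul_apply, Matrix.sum_apply, Matrix.single, ite_and]

theorem tensorFlip_mul_leg₁ (M : Matrix ι ι R) :
    tensorFlip ι R * leg₁ ι M = leg₂ ι M * tensorFlip ι R := by
  ext i j h k
  rw [tensorFlip_mul_apply, mul_tensorFlip_apply]
  by_cases hik : i = k <;> simp [leg₁, leg₂, hik]

theorem tensorFlip_mul_leg₂ (M : Matrix ι ι R) :
    tensorFlip ι R * leg₂ ι M = leg₁ ι M * tensorFlip ι R := by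
  ext i j h k
  rw [tensorFlip_mul_apply, mul_tensorFlip_apply]
  by_cases hhj : h = j <;> simp [leg₁, leg₂, hhj]

theorem scalar_scalar_mul_apply (s : R) (X : Matrix ι ι (Matrix ι ι R)) (i j h k : ι) :
    (Matrix.scalar ι (Matrix.scalar ι s) * X) i j h k = s * X i j h k := by
  simp

end TensorLegs

theorem rtt_inv {R : Type*} [Ring R] {σ p : R} (a₁ a₂ c d : Rˣ) (hσ : ∀ x, Commute σ x)
    (hp₁ : p * ↑a₁⁻¹ = ↑c⁻¹ * p) (hp₂ : p * ↑a₂⁻¹ = ↑d⁻¹ * p)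
    (H : σ * (a₁ * a₂ - a₂ * a₁) = (a₂ * a₁ - c * d) * p) :
    σ * (↑a₂⁻¹ * ↑a₁⁻¹ - ↑a₁⁻¹ * ↑a₂⁻¹) = (↑a₁⁻¹ * ↑a₂⁻¹ - ↑d⁻¹ * ↑c⁻¹) * p := by
  have hconj : (↑a₂⁻¹ * ↑a₁⁻¹ - ↑a₁⁻¹ * ↑a₂⁻¹ : R) =
      ↑a₁⁻¹ * ↑a₂⁻¹ * (a₂ * a₁ - a₁ * a₂) * (↑a₂⁻¹ * ↑a₁⁻¹) := by
    simp [mul_sub, sub_mul, mul_assoc]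
  have hflip : p * (↑a₂⁻¹ * ↑a₁⁻¹) = ↑d⁻¹ * ↑c⁻¹ * p := by
    rw [← mul_assoc, hp₂, mul_assoc, hp₁, mul_assoc]
  have H' : σ * (a₂ * a₁ - a₁ * a₂) = (c * d - a₂ * a₁) * p := by
    rw [← neg_sub, mul_neg, H, ← neg_mul, neg_sub]
  calc σ * (↑a₂⁻¹ * ↑a₁⁻¹ - ↑a₁⁻¹ * ↑a₂⁻¹)
      = ↑a₁⁻¹ * ↑a₂⁻¹ * (σ * (a₂ * a₁ - a₁ * a₂)) * (↑a₂⁻¹ * ↑a₁⁻¹) := by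
        rw [hconj]
        simp only [mul_assoc, fun x y => (hσ x).left_comm y]
    _ = ↑a₁⁻¹ * ↑a₂⁻¹ * (c * d - a₂ * a₁) * (↑d⁻¹ * ↑c⁻¹) * p := by
        rw [H', mul_assoc _ _ p, ← hflip]
        simp only [mul_assoc]
    _ = (↑a₁⁻¹ * ↑a₂⁻¹ - ↑d⁻¹ * ↑c⁻¹) * p := by
        simp [mul_sub, sub_mul, mul_assoc]

section RTT

variable {U : Type*} [Ring U] {ι : Type*} [Fintype ι] [DecidableEq ι]

theorem isYangianType_iff_zSubW_mul {M N : Type*} (A : Matrix M N (LaurentSeries U)) :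
    IsYangianType A ↔ ∀ i h j k,
      zSubW U * (ofZ (A i j) * ofW (A h k) - ofW (A h k) * ofZ (A i j)) =
        ofW (A h j) * ofZ (A i k) - ofZ (A h j) * ofW (A i k) := by
  simp only [IsYangianType, HahnSeries.ext_iff, funext_iff, coeff_coeff_zSubW_mul,
    HahnSeries.coeff_sub, coeff_coeff_ofZ_mul_ofW, coeff_coeff_ofW_mul_ofZ]
  exact forall₄_congr fun _ _ _ _ => forall_comm

theorem isYangianTypeOp_iff_zSubW_mul {M N : Type*} (A : Matrix M N (LaurentSeries U)) :
    IsYangianTypeOp A ↔ ∀ i h j k,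
      zSubW U * (ofW (A h k) * ofZ (A i j) - ofZ (A i j) * ofW (A h k)) =
        ofZ (A i k) * ofW (A h j) - ofW (A i k) * ofZ (A h j) := by
  simp only [IsYangianTypeOp, HahnSeries.ext_iff, funext_iff, coeff_coeff_zSubW_mul,
    HahnSeries.coeff_sub, coeff_coeff_ofZ_mul_ofW, coeff_coeff_ofW_mul_ofZ]
  exact forall₄_congr fun _ _ _ _ => forall_comm


theorem isYangianType_iff_rtt (A : Matrix ι ι (LaurentSeries U)) :
    IsYangianType A ↔
      Matrix.scalar ι (Matrix.scalar ι (zSubW U)) *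
          (leg₁ ι (A.map ofZ) * leg₂ ι (A.map ofW) - leg₂ ι (A.map ofW) * leg₁ ι (A.map ofZ)) =
        (leg₂ ι (A.map ofW) * leg₁ ι (A.map ofZ) - leg₂ ι (A.map ofZ) * leg₁ ι (A.map ofW)) *
          tensorFlip ι _ := by
  simp only [isYangianType_iff_zSubW_mul, ← Matrix.ext_iff, scalar_scalar_mul_apply,
    mul_tensorFlip_apply, Matrix.sub_apply, leg₁_mul_leg₂_apply, leg₂_mul_leg₁_apply,
    Matrix.map_apply]
  exact forall_congr' fun _ => forall_comm

theorem isYangianTypeOp_iff_rtt (A : Matrix ι ι (LaurentSeries U)) :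
    IsYangianTypeOp A ↔
      Matrix.scalar ι (Matrix.scalar ι (zSubW U)) *
          (leg₂ ι (A.map ofW) * leg₁ ι (A.map ofZ) - leg₁ ι (A.map ofZ) * leg₂ ι (A.map ofW)) =
        (leg₁ ι (A.map ofZ) * leg₂ ι (A.map ofW) - leg₁ ι (A.map ofW) * leg₂ ι (A.map ofZ)) *
          tensorFlip ι _ := by
  simp only [isYangianTypeOp_iff_zSubW_mul, ← Matrix.ext_iff, scalar_scalar_mul_apply,
    mul_tensorFlip_apply, Matrix.sub_apply, leg₁_mul_leg₂_apply, leg₂_mul_leg₁_apply,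
    Matrix.map_apply]
  exact forall_congr' fun _ => forall_comm

end RTT

end Yangian

open Yangian

section

variable {U : Type*} [Ring U] {L M N Q : Type*}

theorem IsYangianType.map_C_mul [Fintype M] {A : Matrix M N (LaurentSeries U)}
    (hA : IsYangianType A) {J : Matrix L M U} (hJ : ∀ p m, J p m ∈ Subring.center U) :
    IsYangianType (J.map (HahnSeries.C : U →+* HahnSeries ℤ U) * A) := by
  intro i h j k m n
  have hih := sum_mul_mul_sum_mul_of_mem_center (J i) (hJ h)
  have hhi := sum_mul_mul_sum_mul_of_mem_center' (hJ i) (J h)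
  simp only [coeff_map_C_mul_apply, hih, hhi, ← sum_sub_distrib, ← mul_sub]
  exact sum_congr rfl fun s _ => sum_congr rfl fun s' _ => by rw [hA s s' j k m n]

theorem IsYangianType.mul_map_C [Fintype N] {A : Matrix M N (LaurentSeries U)}
    (hA : IsYangianType A) {I : Matrix N Q U} (hI : ∀ n q, I n q ∈ Subring.center U) :
    IsYangianType (A * I.map (HahnSeries.C : U →+* HahnSeries ℤ U)) := by
  intro i h j k m n
  have hjk := sum_mul_mul_sum_mul_of_mem_center (I · j) (hI · k)
  have hkj := sum_mul_mul_sum_mul_of_mem_center' (hI · j) (I · k)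
  have hIcomm : ∀ t q x, x * I t q = I t q * x := fun t q => Subring.mem_center_iff.mp (hI t q)
  simp only [coeff_mul_map_C_apply, hIcomm]
  simp only [hjk, hkj, ← sum_sub_distrib, ← mul_sub]
  exact sum_congr rfl fun t _ => sum_congr rfl fun t' _ => by rw [hA i h t t' m n]

theorem IsYangianType.isYangianTypeOp_inverse {ι : Type*} [Fintype ι] [DecidableEq ι]
    {A : Matrix ι ι (LaurentSeries U)} (hA : IsYangianType A) (hU : IsUnit A) :
    IsYangianTypeOp (Ring.inverse A) := by
  obtain ⟨u, rfl⟩ := hU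
  rw [isYangianType_iff_rtt] at hA
  rw [Ring.inverse_unit, isYangianTypeOp_iff_rtt]
  have hσ : ∀ X, Commute (Matrix.scalar ι (Matrix.scalar ι (zSubW U))) X :=
    Matrix.scalar_commute _ (Matrix.scalar_commute _ zSubW_commute)
  let S := LaurentSeries (LaurentSeries U)
  let emb (f : LaurentSeries U →+* S) (leg : Matrix ι ι S →+* Matrix ι ι (Matrix ι ι S)) :
      (Matrix ι ι (LaurentSeries U))ˣ →* (Matrix ι ι (Matrix ι ι S))ˣ :=
    Units.map (leg.comp f.mapMatrix).toMonoidHom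
  have key := rtt_inv (p := tensorFlip ι S) (emb ofZ (leg₁ ι) u) (emb ofW (leg₂ ι) u)
    (emb ofZ (leg₂ ι) u) (emb ofW (leg₁ ι) u) hσ
  simp only [emb, Units.coe_map, Units.coe_map_inv] at key
  exact key (tensorFlip_mul_leg₁ _) (tensorFlip_mul_leg₂ _) hA

end

theorem stmt_5_general {U : Type*} [Ring U] :
    (∀ (M N P Q : ℕ) (A : Matrix (Fin M) (Fin N) (LaurentSeries U)),
      IsYangianType A →
      ∀ (J : Matrix (Fin P) (Fin M) U) (I : Matrix (Fin N) (Fin Q) U),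
        (∀ p m, J p m ∈ Subring.center U) →
        (∀ n q, I n q ∈ Subring.center U) →
        IsYangianType
          (J.map (HahnSeries.C : U →+* HahnSeries ℤ U) * A *
            I.map (HahnSeries.C : U →+* HahnSeries ℤ U))) ∧
    (∀ (N : ℕ) (A : Matrix (Fin N) (Fin N) (LaurentSeries U)),
      IsYangianType A → IsUnit A → IsYangianTypeOp (Ring.inverse A)) :=
  ⟨fun _ _ _ _ _ hA _ _ hJ hI => (hA.map_C_mul hJ).mul_map_C hI,
    fun _ _ hA hU => hA.isYangianTypeOp_inverse hU⟩

/-- Let `U` be a unital associative algebra over a field `𝔽` of characteristic 0,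
`Z ⊆ U` its center, and `A(z) ∈ Mat_{M×N}(U((z⁻¹)))` an operator of Yangian type. Then:
(a) for matrices `J ∈ Mat_{P×M}(Z)` and `I ∈ Mat_{N×Q}(Z)` with central entries, the matrix
`J·A(z)·I` is an operator of Yangian type;
(b) if `M = N` and `A(z)` is invertible in `Mat_{N×N}(U((z⁻¹)))`, then `A(z)⁻¹` is an operator
of Yangian type with respect to the opposite product of `U`. -/
theorem stmt_5 {𝔽 : Type*} [Field 𝔽] [CharZero 𝔽] {U : Type*} [Ring U] [Algebra 𝔽 U] :
    (∀ (M N P Q : ℕ) (A : Matrix (Fin M) (Fin N) (LaurentSeries U)),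
      IsYangianType A →
      ∀ (J : Matrix (Fin P) (Fin M) U) (I : Matrix (Fin N) (Fin Q) U),
        (∀ p m, J p m ∈ Subring.center U) →
        (∀ n q, I n q ∈ Subring.center U) →
        IsYangianType
          (J.map (HahnSeries.C : U →+* HahnSeries ℤ U) * A *
            I.map (HahnSeries.C : U →+* HahnSeries ℤ U))) ∧
    (∀ (N : ℕ) (A : Matrix (Fin N) (Fin N) (LaurentSeries U)),
      IsYangianType A → IsUnit A → IsYangianTypeOp (Ring.inverse A)) :=
  stmt_5_general
end

section
/- Let U be a unital associative algebra over a field 𝔽 of characteristic 0, and let A(z) ∈ Mat_{N×N}(U((z^{−1}))) be an operator of Yangian type which is invertible in Mat_{N×N}(U((z^{−1}))). Then for all i,j,h,k ∈ {1,…,N}: (z−w)[A_{ij}(z), (A^{−1})_{hk}(w)] = −δ_{hj} Σ_{t=1}^N A_{it}(z)(A^{−1})_{tk}(w) + δ_{ik} Σ_{t=1}^N (A^{−1})_{ht}(w)A_{tj}(z), an identity of formal Laurent series in the two independent commuting variables z and w. -/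
open HahnSeries Matrix

namespace LaurentSeries

variable {U : Type*} [Ring U]

theorem coeff_single_neg_one_mul (r : U) (x : LaurentSeries U) (n : ℤ) :
    (single (-1) r * x).coeff n = r * x.coeff (n + 1) := by
  simpa using coeff_single_mul_add (r := r) (x := x) (a := n + 1) (b := -1)

theorem coeff_mul_single_neg_one (r : U) (x : LaurentSeries U) (n : ℤ) :
    (x * single (-1) r).coeff n = x.coeff (n + 1) * r := by
  simpa using coeff_mul_single_add (r := r) (x := x) (a := n + 1) (b := -1)

/-- With `single (-1) 1` playing the role of `w`, this is the coefficient of `z^{-m}` in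
`(z - w) x(z)`, viewed as a Laurent series in `w`. -/
noncomputable def subMulCoeff (x : LaurentSeries U) (m : ℤ) : LaurentSeries U :=
  C (x.coeff (m + 1)) - single (-1) (x.coeff m)

theorem coeff_subMulCoeff_mul_sub_mul (x y : LaurentSeries U) (m n : ℤ) :
    (subMulCoeff x m * y - y * subMulCoeff x m).coeff n =
      (x.coeff (m + 1) * y.coeff n - y.coeff n * x.coeff (m + 1)) -
        (x.coeff m * y.coeff (n + 1) - y.coeff (n + 1) * x.coeff m) := by
  simp only [subMulCoeff, mul_sub, sub_mul, coeff_sub, C_apply, coeff_single_zero_mul,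
    coeff_mul_single_zero, coeff_single_neg_one_mul, coeff_mul_single_neg_one]
  abel

end LaurentSeries

theorem Ring.mul_inverse_sub_inverse_mul {R : Type*} [Ring R] {a d p q : R} (ha : IsUnit a)
    (h : d * a - a * d = a * p - q * a) :
    d * Ring.inverse a - Ring.inverse a * d = Ring.inverse a * q - p * Ring.inverse a := by
  set b := Ring.inverse a
  have hab : a * b = 1 := Ring.mul_inverse_cancel a ha
  have hba : b * a = 1 := Ring.inverse_mul_cancel a ha
  calc d * b - b * d = b * (a * d - d * a) * b := by
        simp only [mul_sub, sub_mul, mul_assoc, hab, mul_one, ← mul_assoc b a, hba, one_mul]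
    _ = b * q - p * b := by
        rw [← neg_sub, h]
        simp only [mul_sub, sub_mul, mul_assoc, hab, mul_one, ← mul_assoc b a,
          hba, one_mul, neg_sub]

namespace Matrix

variable {R ι : Type*} [Semiring R] [Fintype ι] [DecidableEq ι]

theorem single_one_mul_apply (i j a b : ι) (M : Matrix ι ι R) :
    (single i j (1 : R) * M) a b = if a = i then M j b else 0 := by
  split_ifs with h
  · subst h; simp
  · exact single_mul_apply_of_ne _ _ _ _ _ h M

theorem mul_single_one_apply (i j a b : ι) (M : Matrix ι ι R) :
    (M * single i j (1 : R)) a b = if b = j then M a i else 0 := by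
  split_ifs with h
  · subst h; simp
  · exact mul_single_apply_of_ne _ _ _ _ _ h M

theorem mul_single_one_mul_apply (i j a b : ι) (M N : Matrix ι ι R) :
    (M * single i j (1 : R) * N) a b = M a i * N j b := by
  simp [mul_apply (M := M * _), mul_single_one_apply]

end Matrix

open LaurentSeries

section

variable {U : Type*} [Ring U] {ι : Type*} [Fintype ι] [DecidableEq ι]

theorem IsYangianType.diagonal_mul_sub_mul_diagonal {A : Matrix ι ι (LaurentSeries U)}
    (hA : IsYangianType A) (i j : ι) (m : ℤ) :
    diagonal (fun _ => subMulCoeff (A i j) m) * A - A * diagonal (fun _ => subMulCoeff (A i j) m) =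
      A * (single j i 1 * A.map fun x => C (x.coeff m)) -
        ((A.map fun x => C (x.coeff m)) * single j i 1) * A := by
  ext h k n
  simp only [Matrix.sub_apply, diagonal_mul, mul_diagonal, coeff_subMulCoeff_mul_sub_mul,
    hA i h j k m n]
  rw [← Matrix.mul_assoc]
  simp only [mul_single_one_mul_apply, map_apply, coeff_sub, C_apply,
    coeff_mul_single_zero, coeff_single_zero_mul]

end

theorem stmt_7_general {U : Type*} [Ring U]
    {N : ℕ} (A : Matrix (Fin N) (Fin N) (LaurentSeries U))
    (hA : IsYangianType A) (hAinv : IsUnit A)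
    (i j h k : Fin N) (m n : ℤ) :
    ((A i j).coeff (m + 1) * (Ring.inverse A h k).coeff n -
        (Ring.inverse A h k).coeff n * (A i j).coeff (m + 1)) -
      ((A i j).coeff m * (Ring.inverse A h k).coeff (n + 1) -
        (Ring.inverse A h k).coeff (n + 1) * (A i j).coeff m) =
    -(if h = j then (1 : U) else 0) *
        (∑ t : Fin N, (A i t).coeff m * (Ring.inverse A t k).coeff n) +
      (if i = k then (1 : U) else 0) *
        (∑ t : Fin N, (Ring.inverse A h t).coeff n * (A t j).coeff m) := by
  have key := congr_arg (fun X => (X h k).coeff n)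
    (Ring.mul_inverse_sub_inverse_mul hAinv (hA.diagonal_mul_sub_mul_diagonal i j m))
  rw [← Matrix.mul_assoc, Matrix.mul_assoc (single j i 1)] at key
  simp only [Matrix.sub_apply, diagonal_mul, mul_diagonal, coeff_subMulCoeff_mul_sub_mul,
    mul_single_one_apply, single_one_mul_apply, @eq_comm _ k i] at key
  rw [key]
  by_cases hhj : h = j <;> by_cases hik : i = k <;>
    simp [hhj, hik, Matrix.mul_apply, coeff_sum, neg_add_eq_sub]

/-- Let `U` be a unital associative algebra over a field `𝔽` of characteristic 0
and `A(z) ∈ Mat_{N×N}(U((z⁻¹)))` an invertible operator of Yangian type. Then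
`(z−w)[A_{ij}(z), (A⁻¹)_{hk}(w)] = −δ_{hj} Σ_t A_{it}(z)(A⁻¹)_{tk}(w)
  + δ_{ik} Σ_t (A⁻¹)_{ht}(w)A_{tj}(z)`,
stated coefficient-wise in the two independent commuting variables `z, w` (coefficient of
`z^{−m} w^{−n}`). -/
theorem stmt_7 {𝔽 : Type*} [Field 𝔽] [CharZero 𝔽] {U : Type*} [Ring U] [Algebra 𝔽 U]
    {N : ℕ} (A : Matrix (Fin N) (Fin N) (LaurentSeries U))
    (hA : IsYangianType A) (hAinv : IsUnit A)
    (i j h k : Fin N) (m n : ℤ) :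
    ((A i j).coeff (m + 1) * (Ring.inverse A h k).coeff n -
        (Ring.inverse A h k).coeff n * (A i j).coeff (m + 1)) -
      ((A i j).coeff m * (Ring.inverse A h k).coeff (n + 1) -
        (Ring.inverse A h k).coeff (n + 1) * (A i j).coeff m) =
    -(if h = j then (1 : U) else 0) *
        (∑ t : Fin N, (A i t).coeff m * (Ring.inverse A t k).coeff n) +
      (if i = k then (1 : U) else 0) *
        (∑ t : Fin N, (Ring.inverse A h t).coeff n * (A t j).coeff m) :=
  stmt_7_general A hA hAinv i j h k m n
end

section
/- Let g, f, I, M, W̃ be as in the general finite W-algebra setup, and let χ : U(g_{≥1}) → 𝔽 be the unique algebra homomorphism with χ(m) = (f|m) for all m ∈ g_{≥1} (it exists because (f|·) vanishes on [g_{≥1}, g_{≥1}]). Then for every w ∈ W̃, g ∈ U(g), q in the unital subalgebra of U(g) generated by g_{≥1/2}, and u in the unital subalgebra of U(g) generated by g_{≥1}: g·q·u·w·1̄ = χ(u) · g·w·q·1̄ in M. -/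
/-!
Since `[g_{≥1}, g_{≥1/2}] ⊆ g_{≥3/2}` is orthogonal to `f`, moving `a ∈ g_{≥1/2}` to the left
past a generator `m − (f|m)` of `I` produces the generator `[m, a]`; so `I` is stable under
right multiplication by the algebra generated by `g_{≥1/2}`. This lets the relations
`[a, w] ∈ I` propagate from generators to `qw − wq ∈ I`, and, through
`mw − (f|m)w = [m, w] + w(m − (f|m))`, to `uw − χ(u)w ∈ I`. Finally
`Gquw − χ(u)Gwq = Gq(uw − χ(u)w) + χ(u)G(qw − wq)`.
-/

section RightStabilizer

variable (R : Type*) {A : Type*} [CommSemiring R] [Ring A] [Algebra R A]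

def Ideal.rightStabilizer (I : Ideal A) : Subalgebra R A where
  carrier := {p | ∀ x ∈ I, x * p ∈ I}
  mul_mem' hp hq x hx := mul_assoc x _ _ ▸ hq _ (hp x hx)
  add_mem' hp hq x hx := (mul_add x _ _).symm ▸ add_mem (hp x hx) (hq x hx)
  algebraMap_mem' r x hx := Algebra.commutes r x ▸ I.mul_mem_left _ hx

variable {R}

theorem Ideal.mul_sub_mul_mem_of_mem_adjoin {I : Ideal A} {S : Set A} {w p : A}
    (hS : Algebra.adjoin R S ≤ I.rightStabilizer R) (hw : ∀ s ∈ S, s * w - w * s ∈ I)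
    (hp : p ∈ Algebra.adjoin R S) : p * w - w * p ∈ I := by
  induction hp using Algebra.adjoin_induction with
  | mem s hs => exact hw s hs
  | algebraMap r => simp [Algebra.commutes]
  | add x y _ _ hx hy => simpa only [add_mul, mul_add, add_sub_add_comm] using add_mem hx hy
  | mul x y _ hy' hx hy =>
    have h : x * y * w - w * (x * y) = x * (y * w - w * y) + (x * w - w * x) * y := by
      noncomm_ring
    exact h ▸ add_mem (I.mul_mem_left x hy) (hS hy' _ hx)

theorem Ideal.mul_sub_smul_mem_of_mem_adjoin {I : Ideal A} {S : Set A} {w : A}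
    (χ : Algebra.adjoin R S →ₐ[R] R)
    (hχ : ∀ s (hs : s ∈ S), s * w - χ ⟨s, Algebra.subset_adjoin hs⟩ • w ∈ I)
    {u : A} (hu : u ∈ Algebra.adjoin R S) : u * w - χ ⟨u, hu⟩ • w ∈ I := by
  induction hu using Algebra.adjoin_induction with
  | mem s hs => exact hχ s hs
  | algebraMap r =>
    rw [show χ ⟨algebraMap R A r, _⟩ = r from χ.commutes r, Algebra.smul_def, sub_self]
    exact I.zero_mem
  | add x y hx' hy' hx hy =>
    rw [show χ ⟨x + y, _⟩ = χ ⟨x, hx'⟩ + χ ⟨y, hy'⟩ from map_add χ ⟨x, hx'⟩ ⟨y, hy'⟩,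
      add_mul, add_smul, add_sub_add_comm]
    exact add_mem hx hy
  | mul x y hx' hy' hx hy =>
    rw [show χ ⟨x * y, _⟩ = χ ⟨x, hx'⟩ * χ ⟨y, hy'⟩ from map_mul χ ⟨x, hx'⟩ ⟨y, hy'⟩]
    have h : x * y * w - (χ ⟨x, hx'⟩ * χ ⟨y, hy'⟩) • w
        = x * (y * w - χ ⟨y, hy'⟩ • w) + χ ⟨y, hy'⟩ • (x * w - χ ⟨x, hx'⟩ • w) := by
      rw [mul_sub, smul_sub, mul_smul_comm, smul_smul, mul_assoc, mul_comm (χ _)]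
      abel
    exact h ▸ add_mem (I.mul_mem_left x hy) (I.smul_of_tower_mem _ hx)

end RightStabilizer

namespace UniversalEnvelopingAlgebra

variable {R L : Type*} [CommRing R] [LieRing L] [LieAlgebra R L]

def gelfandGraevIdeal (n : Submodule R L) (φ : L →ₗ[R] R) :
    Ideal (UniversalEnvelopingAlgebra R L) :=
  Ideal.span {x | ∃ m ∈ n, x = ι R m - algebraMap R _ (φ m)}

theorem ι_lie (x y : L) : ι R ⁅x, y⁆ = ι R x * ι R y - ι R y * ι R x := by
  let : LieRing (UniversalEnvelopingAlgebra R L) := LieRing.ofAssociativeRing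
  rw [LieHom.map_lie, Ring.lie_def]

theorem ι_sub_algebraMap_mem_gelfandGraevIdeal {n : Submodule R L} (φ : L →ₗ[R] R) {m : L}
    (hm : m ∈ n) : ι R m - algebraMap R _ (φ m) ∈ gelfandGraevIdeal n φ :=
  Ideal.subset_span ⟨m, hm, rfl⟩

theorem ι_mem_rightStabilizer_gelfandGraevIdeal {n : Submodule R L} {φ : L →ₗ[R] R} {a : L}
    (hn : ∀ m ∈ n, ⁅m, a⁆ ∈ n) (hφ : ∀ m ∈ n, φ ⁅m, a⁆ = 0) :
    ι R a ∈ (gelfandGraevIdeal n φ).rightStabilizer R := by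
  intro x hx
  induction hx using Submodule.span_induction with
  | mem x hx =>
    obtain ⟨m, hm, rfl⟩ := hx
    -- `[ι m - φ m, ι a] = ι ⁅m, a⁆`, itself a generator since `φ ⁅m, a⁆ = 0`
    have h : (ι R m - algebraMap R _ (φ m)) * ι R a
        = ι R a * (ι R m - algebraMap R _ (φ m)) + (ι R ⁅m, a⁆ - algebraMap R _ (φ ⁅m, a⁆)) := by
      rw [hφ m hm, map_zero, sub_zero, ι_lie, sub_mul, mul_sub, Algebra.commutes]
      abel
    exact h ▸ add_mem (Ideal.mul_mem_left _ _ (ι_sub_algebraMap_mem_gelfandGraevIdeal φ hm))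
      (ι_sub_algebraMap_mem_gelfandGraevIdeal φ (hn m hm))
  | zero => simp
  | add x y _ _ hx hy => simpa only [add_mul] using add_mem hx hy
  | smul r x _ hx => simpa only [smul_eq_mul, mul_assoc] using Ideal.mul_mem_left _ r hx

end UniversalEnvelopingAlgebra

section Grading

variable {R L : Type*} [CommRing R] [LieRing L] [LieAlgebra R L] {gr : ℤ → Submodule R L}

theorem lie_mem_iSup_ge (hbr : ∀ d e : ℤ, ∀ x ∈ gr d, ∀ y ∈ gr e, ⁅x, y⁆ ∈ gr (d + e))
    {a b : ℤ} {x y : L} (hx : x ∈ ⨆ k ≥ a, gr k) (hy : y ∈ ⨆ k ≥ b, gr k) :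
    ⁅x, y⁆ ∈ ⨆ k ≥ a + b, gr k := by
  have hle : Submodule.map₂ (LieModule.toEnd R L L : L →ₗ[R] Module.End R L)
      (⨆ k ≥ a, gr k) (⨆ k ≥ b, gr k) ≤ ⨆ k ≥ a + b, gr k := by
    simp only [Submodule.map₂_iSup_left, Submodule.map₂_iSup_right]
    refine iSup₂_le fun e he => iSup₂_le fun d hd => Submodule.map₂_le.2 fun x hx y hy => ?_
    exact Submodule.mem_iSup_of_mem (d + e)
      (Submodule.mem_iSup_of_mem (by omega) (hbr d e x hx y hy))
  exact hle (Submodule.apply_mem_map₂ _ hx hy)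

theorem apply_eq_zero_of_mem_iSup_ge {B : LinearMap.BilinForm R L}
    (horth : ∀ d e : ℤ, d + e ≠ 0 → ∀ x ∈ gr d, ∀ y ∈ gr e, B x y = 0)
    {d n : ℤ} {f x : L} (hf : f ∈ gr d) (hx : x ∈ ⨆ k ≥ n, gr k) (hdn : 0 < d + n) : B f x = 0 :=
  (iSup₂_le fun k hk y hy => LinearMap.mem_ker.2 (horth d k (by omega) f hf y hy) :
    (⨆ k ≥ n, gr k) ≤ LinearMap.ker (B f)) hx

end Grading

open UniversalEnvelopingAlgebra

theorem stmt_10_general {𝔽 : Type*} [Field 𝔽]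
    {g : Type*} [LieRing g] [LieAlgebra 𝔽 g]
    (B : LinearMap.BilinForm 𝔽 g)
    (gr : ℤ → Submodule 𝔽 g)
    (hbr : ∀ (d e : ℤ), ∀ x ∈ gr d, ∀ y ∈ gr e, ⁅x, y⁆ ∈ gr (d + e))
    (horth : ∀ (d e : ℤ), d + e ≠ 0 → ∀ x ∈ gr d, ∀ y ∈ gr e, B x y = 0)
    (f : g) (hf : f ∈ gr (-2))
    (I : Ideal (UniversalEnvelopingAlgebra 𝔽 g))
    (hI : I = Ideal.span {x | ∃ m ∈ (⨆ k ≥ (2 : ℤ), gr k),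
      x = UniversalEnvelopingAlgebra.ι 𝔽 m - algebraMap 𝔽 _ (B f m)})
    (χ : Algebra.adjoin 𝔽
        ((UniversalEnvelopingAlgebra.ι 𝔽 : g → UniversalEnvelopingAlgebra 𝔽 g) ''
          ((⨆ k ≥ (2 : ℤ), gr k : Submodule 𝔽 g) : Set g)) →ₐ[𝔽] 𝔽)
    (hχ : ∀ (m : g) (hm : m ∈ (⨆ k ≥ (2 : ℤ), gr k : Submodule 𝔽 g)),
      χ ⟨UniversalEnvelopingAlgebra.ι 𝔽 m,
        Algebra.subset_adjoin (Set.mem_image_of_mem _ hm)⟩ = B f m)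
    (w : UniversalEnvelopingAlgebra 𝔽 g)
    (hw : ∀ a ∈ (⨆ k ≥ (1 : ℤ), gr k : Submodule 𝔽 g),
      UniversalEnvelopingAlgebra.ι 𝔽 a * w - w * UniversalEnvelopingAlgebra.ι 𝔽 a ∈ I)
    (G : UniversalEnvelopingAlgebra 𝔽 g)
    (q : UniversalEnvelopingAlgebra 𝔽 g)
    (hq : q ∈ Algebra.adjoin 𝔽
      ((UniversalEnvelopingAlgebra.ι 𝔽 : g → UniversalEnvelopingAlgebra 𝔽 g) ''
        ((⨆ k ≥ (1 : ℤ), gr k : Submodule 𝔽 g) : Set g)))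
    (u : UniversalEnvelopingAlgebra 𝔽 g)
    (hu : u ∈ Algebra.adjoin 𝔽
      ((UniversalEnvelopingAlgebra.ι 𝔽 : g → UniversalEnvelopingAlgebra 𝔽 g) ''
        ((⨆ k ≥ (2 : ℤ), gr k : Submodule 𝔽 g) : Set g))) :
    G * q * u * w - χ ⟨u, hu⟩ • (G * w * q) ∈ I := by
  have hmono {a b : ℤ} (hab : a ≤ b) : (⨆ k ≥ b, gr k) ≤ ⨆ k ≥ a, gr k :=
    biSup_mono fun _ hk => hab.trans hk
  have hstab : Algebra.adjoin 𝔽 (ι 𝔽 '' ((⨆ k ≥ (1 : ℤ), gr k : Submodule 𝔽 g) : Set g))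
      ≤ I.rightStabilizer 𝔽 := by
    refine Algebra.adjoin_le ?_
    rintro _ ⟨a, ha, rfl⟩
    have hlie {m} (hm : m ∈ ⨆ k ≥ (2 : ℤ), gr k) : ⁅m, a⁆ ∈ ⨆ k ≥ (2 + 1 : ℤ), gr k :=
      lie_mem_iSup_ge hbr hm ha
    exact hI ▸ ι_mem_rightStabilizer_gelfandGraevIdeal
      (fun m hm => hmono (by norm_num) (hlie hm))
      (fun m hm => apply_eq_zero_of_mem_iSup_ge horth hf (hlie hm) (by norm_num))
  have hqw : q * w - w * q ∈ I := by
    refine Ideal.mul_sub_mul_mem_of_mem_adjoin hstab ?_ hq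
    rintro _ ⟨a, ha, rfl⟩
    exact hw a ha
  have huw : u * w - χ ⟨u, hu⟩ • w ∈ I := by
    refine Ideal.mul_sub_smul_mem_of_mem_adjoin χ ?_ hu
    rintro _ ⟨m, hm, rfl⟩
    have h : ι 𝔽 m * w - B f m • w
        = (ι 𝔽 m * w - w * ι 𝔽 m) + w * (ι 𝔽 m - algebraMap 𝔽 _ (B f m)) := by
      rw [Algebra.smul_def, Algebra.commutes]
      noncomm_ring
    rw [hχ m hm, h]
    exact add_mem (hw m (hmono (by norm_num) hm))
      (I.mul_mem_left w (hI ▸ ι_sub_algebraMap_mem_gelfandGraevIdeal (B f) hm))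
  have h : G * q * u * w - χ ⟨u, hu⟩ • (G * w * q)
      = (G * q) * (u * w - χ ⟨u, hu⟩ • w) + χ ⟨u, hu⟩ • (G * (q * w - w * q)) := by
    simp only [mul_sub, smul_sub, mul_smul_comm, mul_assoc]
    abel
  exact h ▸ add_mem (I.mul_mem_left _ huw) (I.smul_of_tower_mem _ (I.mul_mem_left G hqw))

/-- Let `χ` be the (unique) algebra homomorphism from the unital subalgebra of
`U(g)` generated by `g_{≥1}` to `𝔽` with `χ(m) = (f|m)` for all `m ∈ g_{≥1}`. Then for every
`w ∈ W̃`, `G ∈ U(g)`, `q` in the unital subalgebra generated by `g_{≥1/2}` and `u` in the unital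
subalgebra generated by `g_{≥1}`: `G·q·u·w·1̄ = χ(u)·G·w·q·1̄` in `M = U(g)/I`, i.e.
`G·q·u·w − χ(u)·(G·w·q) ∈ I`. -/
theorem stmt_10 {𝔽 : Type*} [Field 𝔽] [CharZero 𝔽]
    {g : Type*} [LieRing g] [LieAlgebra 𝔽 g]
    (B : LinearMap.BilinForm 𝔽 g)
    (hsymm : ∀ x y : g, B x y = B y x)
    (hinvar : ∀ x y z : g, B ⁅x, y⁆ z = B x ⁅y, z⁆)
    (hnondeg : ∀ x : g, (∀ y : g, B x y = 0) → x = 0)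
    (gr : ℤ → Submodule 𝔽 g)
    (hds : DirectSum.IsInternal gr)
    (hbr : ∀ (d e : ℤ), ∀ x ∈ gr d, ∀ y ∈ gr e, ⁅x, y⁆ ∈ gr (d + e))
    (horth : ∀ (d e : ℤ), d + e ≠ 0 → ∀ x ∈ gr d, ∀ y ∈ gr e, B x y = 0)
    (f : g) (hf : f ∈ gr (-2))
    (I : Ideal (UniversalEnvelopingAlgebra 𝔽 g))
    (hI : I = Ideal.span {x | ∃ m ∈ (⨆ k ≥ (2 : ℤ), gr k),
      x = UniversalEnvelopingAlgebra.ι 𝔽 m - algebraMap 𝔽 _ (B f m)})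
    (χ : Algebra.adjoin 𝔽
        ((UniversalEnvelopingAlgebra.ι 𝔽 : g → UniversalEnvelopingAlgebra 𝔽 g) ''
          ((⨆ k ≥ (2 : ℤ), gr k : Submodule 𝔽 g) : Set g)) →ₐ[𝔽] 𝔽)
    (hχ : ∀ (m : g) (hm : m ∈ (⨆ k ≥ (2 : ℤ), gr k : Submodule 𝔽 g)),
      χ ⟨UniversalEnvelopingAlgebra.ι 𝔽 m,
        Algebra.subset_adjoin (Set.mem_image_of_mem _ hm)⟩ = B f m)
    (w : UniversalEnvelopingAlgebra 𝔽 g)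
    (hw : ∀ a ∈ (⨆ k ≥ (1 : ℤ), gr k : Submodule 𝔽 g),
      UniversalEnvelopingAlgebra.ι 𝔽 a * w - w * UniversalEnvelopingAlgebra.ι 𝔽 a ∈ I)
    (G : UniversalEnvelopingAlgebra 𝔽 g)
    (q : UniversalEnvelopingAlgebra 𝔽 g)
    (hq : q ∈ Algebra.adjoin 𝔽
      ((UniversalEnvelopingAlgebra.ι 𝔽 : g → UniversalEnvelopingAlgebra 𝔽 g) ''
        ((⨆ k ≥ (1 : ℤ), gr k : Submodule 𝔽 g) : Set g)))
    (u : UniversalEnvelopingAlgebra 𝔽 g)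
    (hu : u ∈ Algebra.adjoin 𝔽
      ((UniversalEnvelopingAlgebra.ι 𝔽 : g → UniversalEnvelopingAlgebra 𝔽 g) ''
        ((⨆ k ≥ (2 : ℤ), gr k : Submodule 𝔽 g) : Set g))) :
    G * q * u * w - χ ⟨u, hu⟩ • (G * w * q) ∈ I :=
  stmt_10_general B gr hbr horth f hf I hI χ hχ w hw G q hq u hu
end

section
/- Let g, f, I be as in the general finite W-algebra setup and let F_Δ U(g) (Δ ∈ ½ℤ) be the Kazhdan filtration, with F_ΔI = F_ΔU(g) ∩ I. Then: (a) for every Δ < 0, F_ΔU(g) = F_ΔI (equivalently, F_ΔU(g) ⊆ I); (b) F₀U(g) = 𝔽·1 + F₀I, and this sum is direct provided I ≠ U(g). -/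
/-!
Modulo the left ideal `I`, a factor `a ∈ g_j` with `j ≥ 1` of a monomial can be moved
to the far right, where it turns into the scalar `(f|a)`; the commutators produced on the way are
shorter monomials of Kazhdan degree lowered by `1`. Moreover `(f|a) = 0` unless `j = 1`, and
removing a factor of degree `1` does not change the Kazhdan degree. A monomial of Kazhdan degree
`≤ 0` always has such a factor unless it is empty, since every factor of degree `≤ 1/2`
contributes at least `1/2`. Induction on the length shows that such a monomial is a scalar
modulo `I`, and that this scalar is `0` when the degree is negative.
-/

open UniversalEnvelopingAlgebra

namespace KazhdanFiltration

variable {𝔽 g : Type*} [Field 𝔽] [LieRing g] [LieAlgebra 𝔽 g] {gr : ℤ → Submodule 𝔽 g}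

/-- `⟨k, a⟩ : Σ k, gr k` stands for a homogeneous factor `a ∈ g_{k/2}`. -/
noncomputable def monomial (L : List (Σ k, gr k)) : UniversalEnvelopingAlgebra 𝔽 g :=
  (L.map fun a => ι 𝔽 (a.2 : g)).prod

/-- Twice the Kazhdan degree `Σ (1 - j_t)` of `monomial L`. -/
def weight (L : List (Σ k, gr k)) : ℤ :=
  (L.map fun a => 2 - a.1).sum

@[simp] lemma monomial_nil : monomial ([] : List (Σ k, gr k)) = 1 := rfl

@[simp] lemma monomial_cons (a : Σ k, gr k) (L : List (Σ k, gr k)) :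
    monomial (a :: L) = ι 𝔽 (a.2 : g) * monomial L := by
  simp [monomial]

@[simp] lemma monomial_append (P L : List (Σ k, gr k)) :
    monomial (P ++ L) = monomial P * monomial L := by
  simp [monomial]

@[simp] lemma weight_nil : weight ([] : List (Σ k, gr k)) = 0 := rfl

@[simp] lemma weight_cons (a : Σ k, gr k) (L : List (Σ k, gr k)) :
    weight (a :: L) = 2 - a.1 + weight L := by
  simp [weight]

@[simp] lemma weight_append (P L : List (Σ k, gr k)) :
    weight (P ++ L) = weight P + weight L := by
  simp [weight]

lemma length_le_weight {L : List (Σ k, gr k)} (h : ∀ a ∈ L, a.1 ≤ 1) :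
    (L.length : ℤ) ≤ weight L := by
  induction L with
  | nil => simp
  | cons a L ih =>
    have ha := h a List.mem_cons_self
    have hL := ih fun b hb => h b (List.mem_cons_of_mem a hb)
    simp only [List.length_cons, weight_cons]
    omega

lemma exists_two_le_of_weight_nonpos {L : List (Σ k, gr k)} (hL : L ≠ []) (hw : weight L ≤ 0) :
    ∃ a ∈ L, 2 ≤ a.1 := by
  by_contra! h
  have hlen := length_le_weight fun a ha => Int.lt_add_one_iff.mp (h a ha)
  have : 0 < L.length := List.length_pos_iff.mpr hL
  omega

attribute [local instance] LieRing.ofAssociativeRing LieAlgebra.ofAssociativeAlgebra in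
lemma ι_mul_ι (x y : g) : ι 𝔽 x * ι 𝔽 y = ι 𝔽 y * ι 𝔽 x + ι 𝔽 ⁅x, y⁆ := by
  rw [LieHom.map_lie, Ring.lie_def]
  abel

lemma monomial_sub_mul_ι_mem (hbr : ∀ d e : ℤ, ∀ x ∈ gr d, ∀ y ∈ gr e, ⁅x, y⁆ ∈ gr (d + e))
    (T : AddSubgroup (UniversalEnvelopingAlgebra 𝔽 g)) (a : Σ k, gr k) (L : List (Σ k, gr k)) :
    ∀ P : List (Σ k, gr k),
      (∀ L' : List (Σ k, gr k), L'.length = P.length + L.length →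
        weight L' = weight (P ++ a :: L) - 2 → monomial L' ∈ T) →
      monomial (P ++ a :: L) - monomial (P ++ L) * ι 𝔽 (a.2 : g) ∈ T := by
  induction L with
  | nil => simp
  | cons b L ih =>
    intro P hT
    let c : Σ k, gr k := ⟨a.1 + b.1, ⟨⁅(a.2 : g), (b.2 : g)⁆, hbr _ _ _ a.2.2 _ b.2.2⟩⟩
    have hshift : monomial (P ++ [b] ++ a :: L) - monomial (P ++ [b] ++ L) * ι 𝔽 (a.2 : g) ∈ T :=
      ih (P ++ [b]) fun L' hlen hw => hT L' (by simp [hlen]; omega) (by simp_all; omega)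
    have hc : monomial (P ++ c :: L) ∈ T := hT _ (by simp) (by simp [c]; omega)
    have hsplit : monomial (P ++ a :: b :: L) =
        monomial (P ++ [b] ++ a :: L) + monomial (P ++ c :: L) := by
      simp only [monomial_append, monomial_cons, monomial_nil, mul_one, c]
      rw [← mul_assoc (ι 𝔽 (a.2 : g)), ι_mul_ι]
      noncomm_ring
    have hright : monomial (P ++ [b] ++ L) = monomial (P ++ b :: L) := by simp
    rw [hsplit, ← hright, add_sub_right_comm]
    exact T.add_mem hshift hc

variable {I : Ideal (UniversalEnvelopingAlgebra 𝔽 g)} {χ : Module.Dual 𝔽 g}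

theorem exists_monomial_sub_algebraMap_mem
    (hbr : ∀ d e : ℤ, ∀ x ∈ gr d, ∀ y ∈ gr e, ⁅x, y⁆ ∈ gr (d + e))
    (hχ : ∀ k, 2 < k → ∀ m ∈ gr k, χ m = 0)
    (hI : ∀ k, 2 ≤ k → ∀ m ∈ gr k, ι 𝔽 m - algebraMap 𝔽 _ (χ m) ∈ I)
    (L : List (Σ k, gr k)) (hw : weight L ≤ 0) :
    ∃ c : 𝔽, monomial L - algebraMap 𝔽 _ c ∈ I ∧ (weight L < 0 → c = 0) := by
  induction hn : L.length using Nat.strong_induction_on generalizing L with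
  | _ n ih =>
  rcases eq_or_ne L [] with rfl | hL
  · exact ⟨1, by simp, by simp⟩
  obtain ⟨a, ha, hk⟩ := exists_two_le_of_weight_nonpos hL hw
  obtain ⟨P, L₂, rfl⟩ := List.append_of_mem ha
  have hlen : (P ++ L₂).length < n := by simp [← hn]
  have hmove : monomial (P ++ a :: L₂) - monomial (P ++ L₂) * ι 𝔽 (a.2 : g) ∈ I := by
    refine monomial_sub_mul_ι_mem hbr I.toAddSubgroup a L₂ P fun L' hlen' hw' => ?_
    obtain ⟨c, hc, hc0⟩ := ih L'.length (by simp [← hn, hlen']) L' (by omega) rfl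
    simpa [hc0 (by omega)] using hc
  have hreduce : monomial (P ++ a :: L₂) - χ a.2 • monomial (P ++ L₂) ∈ I := by
    have hgen := I.mul_mem_left (monomial (P ++ L₂)) (hI a.1 hk a.2 a.2.2)
    rw [mul_sub, ← Algebra.commutes, ← Algebra.smul_def] at hgen
    simpa using I.add_mem hmove hgen
  rcases hk.eq_or_lt with hk2 | hk2
  · have hw' : weight (P ++ L₂) = weight (P ++ a :: L₂) := by simp [← hk2]
    obtain ⟨c, hc, hc0⟩ := ih _ hlen (P ++ L₂) (hw' ▸ hw) rfl
    refine ⟨χ a.2 * c, ?_, fun h => by rw [hc0 (hw' ▸ h), mul_zero]⟩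
    have hsplit : monomial (P ++ a :: L₂) - algebraMap 𝔽 _ (χ a.2 * c) =
        (monomial (P ++ a :: L₂) - χ a.2 • monomial (P ++ L₂)) +
          χ a.2 • (monomial (P ++ L₂) - algebraMap 𝔽 _ c) := by
      rw [smul_sub, map_mul, ← Algebra.smul_def]
      abel
    rw [hsplit]
    exact I.add_mem hreduce (I.smul_of_tower_mem _ hc)
  · refine ⟨0, ?_, fun _ => rfl⟩
    simpa [hχ a.1 hk2 a.2 a.2.2] using hreduce

def kazhdanSpan (gr : ℤ → Submodule 𝔽 g) (d : ℤ) : Submodule 𝔽 (UniversalEnvelopingAlgebra 𝔽 g) :=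
  Submodule.span 𝔽 {x | ∃ (s : ℕ) (idx : Fin s → ℤ) (a : Fin s → g),
    (∀ t, a t ∈ gr (idx t)) ∧ (∑ t, (2 - idx t)) ≤ d ∧
    x = (List.ofFn fun t => ι 𝔽 (a t)).prod}

lemma kazhdanSpan_le {d : ℤ} {T : Submodule 𝔽 (UniversalEnvelopingAlgebra 𝔽 g)}
    (h : ∀ L : List (Σ k, gr k), weight L ≤ d → monomial L ∈ T) : kazhdanSpan gr d ≤ T := by
  refine Submodule.span_le.mpr ?_
  rintro _ ⟨s, idx, a, ha, hd, rfl⟩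
  have := h (List.ofFn fun t => ⟨idx t, a t, ha t⟩)
    (by simpa [weight, List.map_ofFn, List.sum_ofFn] using hd)
  simpa [monomial, List.map_ofFn, Function.comp_def] using this

lemma algebraMap_mem_kazhdanSpan {d : ℤ} (hd : 0 ≤ d) (c : 𝔽) :
    algebraMap 𝔽 _ c ∈ kazhdanSpan gr d := by
  rw [Algebra.algebraMap_eq_smul_one]
  exact Submodule.smul_mem _ c
    (Submodule.subset_span ⟨0, Fin.elim0, Fin.elim0, Fin.rec0, by simpa using hd, by simp⟩)

end KazhdanFiltration

open KazhdanFiltration in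
theorem stmt_12_general {𝔽 : Type*} [Field 𝔽]
    {g : Type*} [LieRing g] [LieAlgebra 𝔽 g]
    (B : LinearMap.BilinForm 𝔽 g)
    (gr : ℤ → Submodule 𝔽 g)
    (hbr : ∀ (d e : ℤ), ∀ x ∈ gr d, ∀ y ∈ gr e, ⁅x, y⁆ ∈ gr (d + e))
    (horth : ∀ (d e : ℤ), d + e ≠ 0 → ∀ x ∈ gr d, ∀ y ∈ gr e, B x y = 0)
    (f : g) (hf : f ∈ gr (-2))
    (I : Ideal (UniversalEnvelopingAlgebra 𝔽 g))
    (hI : I = Ideal.span {x | ∃ m ∈ (⨆ k ≥ (2 : ℤ), gr k),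
      x = UniversalEnvelopingAlgebra.ι 𝔽 m - algebraMap 𝔽 _ (B f m)})
    (F : ℤ → Submodule 𝔽 (UniversalEnvelopingAlgebra 𝔽 g))
    (hF : ∀ d : ℤ, F d = Submodule.span 𝔽
      {x | ∃ (s : ℕ) (idx : Fin s → ℤ) (a : Fin s → g),
        (∀ t, a t ∈ gr (idx t)) ∧ (∑ t, (2 - idx t)) ≤ d ∧
        x = (List.ofFn fun t => UniversalEnvelopingAlgebra.ι 𝔽 (a t)).prod}) :
    (∀ d : ℤ, d < 0 → ∀ x ∈ F d, x ∈ I) ∧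
    (∀ x ∈ F 0, ∃ c : 𝔽,
      x - algebraMap 𝔽 (UniversalEnvelopingAlgebra 𝔽 g) c ∈ F 0 ∧
      x - algebraMap 𝔽 (UniversalEnvelopingAlgebra 𝔽 g) c ∈ I) ∧
    (I ≠ ⊤ → ∀ c : 𝔽, algebraMap 𝔽 (UniversalEnvelopingAlgebra 𝔽 g) c ∈ I → c = 0) := by
  have hχ : ∀ k, 2 < k → ∀ m ∈ gr k, B f m = 0 := fun k hk m hm =>
    horth (-2) k (by omega) f hf m hm
  have hgen : ∀ k, 2 ≤ k → ∀ m ∈ gr k, ι 𝔽 m - algebraMap 𝔽 _ (B f m) ∈ I := fun k hk m hm =>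
    hI ▸ Ideal.subset_span ⟨m, Submodule.mem_iSup_of_mem k (Submodule.mem_iSup_of_mem hk hm), rfl⟩
  have hmono := exists_monomial_sub_algebraMap_mem hbr hχ hgen
  refine ⟨fun d hd x hx => ?_, fun x hx => ?_, fun hne c hc => ?_⟩
  · refine kazhdanSpan_le (T := I.restrictScalars 𝔽) (fun L hL => ?_) ((hF d).le hx)
    obtain ⟨c, hc, hc0⟩ := hmono L (by omega)
    simpa [hc0 (by omega)] using hc
  · have hx' : x ∈ 𝔽 ∙ 1 ⊔ I.restrictScalars 𝔽 := by
      refine kazhdanSpan_le (fun L hL => ?_) ((hF 0).le hx)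
      obtain ⟨c, hc, -⟩ := hmono L hL
      rw [← sub_add_cancel (monomial L) (algebraMap 𝔽 _ c)]
      exact add_mem (Submodule.mem_sup_right hc) (Submodule.mem_sup_left
        (Submodule.mem_span_singleton.mpr ⟨c, (Algebra.algebraMap_eq_smul_one c).symm⟩))
    obtain ⟨_, hy, z, hz, rfl⟩ := Submodule.mem_sup.mp hx'
    obtain ⟨c, rfl⟩ := Submodule.mem_span_singleton.mp hy
    refine ⟨c, sub_mem hx ((hF 0).ge (algebraMap_mem_kazhdanSpan le_rfl c)), ?_⟩
    simpa [Algebra.algebraMap_eq_smul_one] using hz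
  · by_contra hc0
    exact hne (I.eq_top_of_isUnit_mem hc ((IsUnit.mk0 c hc0).map _))

/-- (a) for every `Δ < 0`, `F_Δ U(g) ⊆ I` (so `F_Δ U(g) = F_Δ I`);
(b) `F₀U(g) = 𝔽·1 + F₀I`: every `x ∈ F₀U(g)` is of the form `c·1 + i` with `c ∈ 𝔽` and
`i ∈ F₀I = F₀U(g) ∩ I`; and the sum is direct provided `I ≠ U(g)`: no nonzero scalar lies
in `I`. -/
theorem stmt_12 {𝔽 : Type*} [Field 𝔽] [CharZero 𝔽]
    {g : Type*} [LieRing g] [LieAlgebra 𝔽 g]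
    (B : LinearMap.BilinForm 𝔽 g)
    (hsymm : ∀ x y : g, B x y = B y x)
    (hinvar : ∀ x y z : g, B ⁅x, y⁆ z = B x ⁅y, z⁆)
    (hnondeg : ∀ x : g, (∀ y : g, B x y = 0) → x = 0)
    (gr : ℤ → Submodule 𝔽 g)
    (hds : DirectSum.IsInternal gr)
    (hbr : ∀ (d e : ℤ), ∀ x ∈ gr d, ∀ y ∈ gr e, ⁅x, y⁆ ∈ gr (d + e))
    (horth : ∀ (d e : ℤ), d + e ≠ 0 → ∀ x ∈ gr d, ∀ y ∈ gr e, B x y = 0)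
    (f : g) (hf : f ∈ gr (-2))
    (I : Ideal (UniversalEnvelopingAlgebra 𝔽 g))
    (hI : I = Ideal.span {x | ∃ m ∈ (⨆ k ≥ (2 : ℤ), gr k),
      x = UniversalEnvelopingAlgebra.ι 𝔽 m - algebraMap 𝔽 _ (B f m)})
    (F : ℤ → Submodule 𝔽 (UniversalEnvelopingAlgebra 𝔽 g))
    (hF : ∀ d : ℤ, F d = Submodule.span 𝔽
      {x | ∃ (s : ℕ) (idx : Fin s → ℤ) (a : Fin s → g),
        (∀ t, a t ∈ gr (idx t)) ∧ (∑ t, (2 - idx t)) ≤ d ∧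
        x = (List.ofFn fun t => UniversalEnvelopingAlgebra.ι 𝔽 (a t)).prod}) :
    (∀ d : ℤ, d < 0 → ∀ x ∈ F d, x ∈ I) ∧
    (∀ x ∈ F 0, ∃ c : 𝔽,
      x - algebraMap 𝔽 (UniversalEnvelopingAlgebra 𝔽 g) c ∈ F 0 ∧
      x - algebraMap 𝔽 (UniversalEnvelopingAlgebra 𝔽 g) c ∈ I) ∧
    (I ≠ ⊤ → ∀ c : 𝔽, algebraMap 𝔽 (UniversalEnvelopingAlgebra 𝔽 g) c ∈ I → c = 0) :=
  stmt_12_general B gr hbr horth f hf I hI F hF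
end
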